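/- Let g ≥ 1 and let q be an odd integer. Suppose P_0, ..., P_g ∈ Z[t] are polynomials such that (t-1)·P_0(t) ≡ t^{2g+1} + 1 (mod 2) and (t-1)·P_d(t) ≡ t^{2g+1} + t^{2g+1-d} + t^d + 1 (mod 2) for d = 1, ..., g. Then P_0, ..., P_g are linearly independent over Q. -/

import Mathlib

/-!
Reducing mod 2, the polynomials `(t - 1) P_d` become `t^(2g+1) + 1` and
`t^(2g+1) + t^(2g+1-d) + t^d + 1`, which are linearly independent over `𝔽₂`: for `1 ≤ d ≤ g`
the coefficient of `t^d` detects the `d`-th one alone, and then the constant term detects the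
first. Linear independence mod `p` lifts to `ℤ` by descent (a nontrivial integer relation
could be divided by `p` forever), multiplication by `t - 1` is injective, and linear
independence over `ℤ` is the same as over `ℚ`.
-/

open Polynomial

namespace Polynomial

section Coefficients

variable {R : Type*} [Semiring R] {g d i : ℕ}

lemma coeff_X_pow_add_one_of_pos_of_lt (hd : 0 < d) (hdg : d < 2 * g + 1) :
    ((X ^ (2 * g + 1) + 1 : R[X])).coeff d = 0 := by
  simp [coeff_X_pow, coeff_one, hdg.ne, hd.ne']

lemma coeff_X_pow_add_X_pow_add_X_pow_add_one (hd : 0 < d) (hdg : d ≤ g) (hi : i ≤ g) :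
    ((X ^ (2 * g + 1) + X ^ (2 * g + 1 - i) + X ^ i + 1 : R[X])).coeff d =
      if d = i then 1 else 0 := by
  simp only [coeff_add, coeff_X_pow, coeff_one]
  rw [if_neg (by omega), if_neg (by omega), if_neg hd.ne']
  simp

end Coefficients

lemma linearIndependent_palindromic_quadrinomials {R : Type*} [Ring R] (g : ℕ)
    (Q : Fin (g + 1) → R[X]) (hQ0 : Q 0 = X ^ (2 * g + 1) + 1)
    (hQ : ∀ d : Fin (g + 1), 1 ≤ (d : ℕ) →
      Q d = X ^ (2 * g + 1) + X ^ (2 * g + 1 - (d : ℕ)) + X ^ (d : ℕ) + 1) :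
    LinearIndependent R Q := by
  rw [Fintype.linearIndependent_iff]
  intro a ha
  have hcoeff (n : ℕ) : ∑ i, a i * (Q i).coeff n = 0 := by
    simpa [finsetSum_coeff] using congr(coeff $ha n)
  have hpos (d : Fin (g + 1)) (hd : d ≠ 0) : a d = 0 := by
    have hd : 0 < (d : ℕ) := Fin.pos_iff_ne_zero.mpr hd
    have hQd (i : Fin (g + 1)) : (Q i).coeff d = if i = d then 1 else 0 := by
      rcases Nat.eq_zero_or_pos i with hi | hi
      · rw [show i = 0 from Fin.ext hi, hQ0, coeff_X_pow_add_one_of_pos_of_lt hd (by omega),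
          if_neg (by simp [Fin.ext_iff]; omega)]
      · rw [hQ i hi, coeff_X_pow_add_X_pow_add_X_pow_add_one hd (by omega) (by omega)]
        simp [Fin.ext_iff, eq_comm]
    simpa [hQd] using hcoeff d
  have hQ_coeff_zero (i : Fin (g + 1)) : (Q i).coeff 0 = 1 := by
    rcases Nat.eq_zero_or_pos i with hi | hi
    · simp [show i = 0 from Fin.ext hi, hQ0, coeff_X_pow]
    · have : 0 ≠ 2 * g + 1 - i := by omega
      simp [hQ i hi, coeff_X_pow, coeff_one, hi.ne, this]
  intro i
  rcases eq_or_ne i 0 with rfl | hi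
  · simpa [hQ_coeff_zero, Fintype.sum_eq_single 0 hpos] using hcoeff 0
  · exact hpos i hi

theorem linearIndependent_of_linearIndependent_map_intCast_zmod {ι : Type*} [Fintype ι] {p : ℕ}
    (hp : 1 < p) {v : ι → ℤ[X]}
    (hv : LinearIndependent (ZMod p) fun i => (v i).map (Int.castRingHom (ZMod p))) :
    LinearIndependent ℤ v := by
  rw [Fintype.linearIndependent_iff] at hv ⊢
  have hdvd (c : ι → ℤ) (hc : ∑ i, c i • v i = 0) (i : ι) : (p : ℤ) ∣ c i := by
    rw [← ZMod.intCast_zmod_eq_zero_iff_dvd]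
    refine hv (fun i => (c i : ZMod p)) ?_ i
    simpa [Polynomial.map_sum, Int.cast_smul_eq_zsmul] using
      congr(($hc).map (Int.castRingHom (ZMod p)))
  have hpow (k : ℕ) (c : ι → ℤ) (hc : ∑ i, c i • v i = 0) (i : ι) : (p : ℤ) ^ k ∣ c i := by
    induction k generalizing c with
    | zero => simp
    | succ k ih =>
      choose c' hc' using hdvd c hc
      have hc'_rel : ∑ i, c' i • v i = 0 := by
        have : (p : ℤ) • ∑ i, c' i • v i = 0 := by
          simpa only [Finset.smul_sum, smul_smul, ← hc'] using hc
        exact (smul_eq_zero.mp this).resolve_left (by omega)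
      rw [hc' i, pow_succ']
      exact mul_dvd_mul_left _ (ih c' hc'_rel)
  intro c hc i
  refine Int.eq_zero_of_abs_lt_dvd (hpow (c i).natAbs c hc i) ?_
  rw [Int.abs_eq_natAbs]
  exact_mod_cast Nat.lt_pow_self hp

end Polynomial

theorem LinearIndependent.polynomial_map_fractionRing {R K ι : Type*} [CommRing R] [CommRing K]
    [Algebra R K] [IsFractionRing R K] {v : ι → R[X]} (hv : LinearIndependent R v) :
    LinearIndependent K fun i => (v i).map (algebraMap R K) := by
  rw [← LinearIndependent.iff_fractionRing R K]
  exact hv.map' (mapAlg R K).toLinearMap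
    (LinearMap.ker_eq_bot.mpr (map_injective _ (IsFractionRing.injective R K)))

theorem stmt8_general (g : ℕ)
    (P : Fin (g + 1) → Polynomial ℤ)
    (h0 : ((X - 1) * P 0).map (Int.castRingHom (ZMod 2)) = X ^ (2 * g + 1) + 1)
    (hd : ∀ d : Fin (g + 1), 1 ≤ (d : ℕ) →
      ((X - 1) * P d).map (Int.castRingHom (ZMod 2)) =
        X ^ (2 * g + 1) + X ^ (2 * g + 1 - (d : ℕ)) + X ^ (d : ℕ) + 1) :
    LinearIndependent ℚ (fun d => (P d).map (Int.castRingHom ℚ)) := by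
  have hmod2 :
      LinearIndependent (ZMod 2) fun d => ((X - 1) * P d).map (Int.castRingHom (ZMod 2)) :=
    linearIndependent_palindromic_quadrinomials g _ h0 hd
  have hZ : LinearIndependent ℤ P :=
    (linearIndependent_of_linearIndependent_map_intCast_zmod one_lt_two hmod2).of_comp
      (LinearMap.mulLeft ℤ (X - 1))
  simpa only [algebraMap_int_eq] using hZ.polynomial_map_fractionRing (K := ℚ)

theorem stmt8 (g : ℕ) (hg : 1 ≤ g) (q : ℤ) (hq : Odd q)
    (P : Fin (g + 1) → Polynomial ℤ)
    (h0 : ((X - 1) * P 0).map (Int.castRingHom (ZMod 2)) = X ^ (2 * g + 1) + 1)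
    (hd : ∀ d : Fin (g + 1), 1 ≤ (d : ℕ) →
      ((X - 1) * P d).map (Int.castRingHom (ZMod 2)) =
        X ^ (2 * g + 1) + X ^ (2 * g + 1 - (d : ℕ)) + X ^ (d : ℕ) + 1) :
    LinearIndependent ℚ (fun d => (P d).map (Int.castRingHom ℚ)) :=
  stmt8_general g P h0 hd
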